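/- arXiv:1205.4904 — 4 statements merged into one kernel-verified Lean document; each statement's English description precedes it below -/
import Mathlib

section
/- Let $s\ge 1$ be an integer, $m>0$, $0<\Lambda\le\Lambda_0$, $P\ge 0$ a real number and $L\in\mathbb{N}$. Then, writing $\kappa':=\max(\Lambda',m)$ and $\kappa:=\max(\Lambda,m)$, one has $\sum_{\lambda=0}^{L}\frac{1}{2^{\lambda}\lambda!}\int_{\Lambda}^{\Lambda_0}\Lambda'^{-s-1}\Big(\log^{\lambda}\big(\max(\tfrac{P}{\kappa'},\tfrac{\kappa'}{m})\big)+\sqrt{\lambda!}\Big)\,d\Lambda' \;\le\; 5\,\frac{\Lambda^{-s}}{s}\,\sum_{\lambda=0}^{L}\frac{\log^{\lambda}\big(\max(\tfrac{P}{\kappa},\tfrac{\kappa}{m})\big)}{2^{\lambda}\lambda!}$. -/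
open Finset Real in
private lemma tri_aux (x y : ℝ) (hx : 0 ≤ x) (hy : 0 ≤ y) (n : ℕ) :
    ∑ l ∈ range n, (x + y) ^ l / (Nat.factorial l : ℝ) ≤
      (∑ j ∈ range n, x ^ j / (Nat.factorial j : ℝ)) * Real.exp y := by
  have step1 : ∀ l : ℕ, (x + y) ^ l / (Nat.factorial l : ℝ) =
      ∑ j ∈ range (l + 1), (x ^ j / (Nat.factorial j : ℝ)) *
        (y ^ (l - j) / (Nat.factorial (l - j) : ℝ)) := by
    intro l
    rw [add_pow, Finset.sum_div]
    refine Finset.sum_congr rfl fun j hj => ?_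
    have hjl : j ≤ l := Nat.lt_succ_iff.mp (Finset.mem_range.mp hj)
    have hfac : ((l.choose j : ℝ)) * (Nat.factorial j) * (Nat.factorial (l - j)) = Nat.factorial l := by
      exact_mod_cast congrArg (Nat.cast (R := ℝ)) (Nat.choose_mul_factorial_mul_factorial hjl)
    have h1 : (Nat.factorial j : ℝ) ≠ 0 := Nat.cast_ne_zero.mpr (Nat.factorial_ne_zero j)
    have h2 : (Nat.factorial (l - j) : ℝ) ≠ 0 := Nat.cast_ne_zero.mpr (Nat.factorial_ne_zero _)
    have h3 : (Nat.factorial l : ℝ) ≠ 0 := Nat.cast_ne_zero.mpr (Nat.factorial_ne_zero l)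
    field_simp
    linear_combination (x ^ j * y ^ (l - j)) * hfac
  calc ∑ l ∈ range n, (x + y) ^ l / (Nat.factorial l : ℝ)
      = ∑ l ∈ range n, ∑ j ∈ range (l + 1), (x ^ j / (Nat.factorial j : ℝ)) *
          (y ^ (l - j) / (Nat.factorial (l - j) : ℝ)) := Finset.sum_congr rfl fun l _ => step1 l
    _ = ∑ j ∈ range n, ∑ l ∈ Finset.Ico j n, (x ^ j / (Nat.factorial j : ℝ)) *
          (y ^ (l - j) / (Nat.factorial (l - j) : ℝ)) := by
        refine Finset.sum_comm' fun l j => ?_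
        simp only [Finset.mem_range, Finset.mem_Ico, Nat.lt_succ_iff]
        omega
    _ ≤ ∑ j ∈ range n, (x ^ j / (Nat.factorial j : ℝ)) * Real.exp y := by
        refine Finset.sum_le_sum fun j _ => ?_
        rw [← Finset.mul_sum]
        refine mul_le_mul_of_nonneg_left ?_ (by positivity)
        rw [Finset.sum_Ico_eq_sum_range]
        simp only [Nat.add_sub_cancel_left]
        exact Real.sum_le_exp_of_nonneg hy _
    _ = (∑ j ∈ range n, x ^ j / (Nat.factorial j : ℝ)) * Real.exp y :=
        (Finset.sum_mul _ _ _).symm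

set_option maxHeartbeats 1000000 in
open Finset Real in
/-- The flow-parameter integral estimate: for `s ≥ 1`, `m > 0`, `0 < Λ ≤ Λ₀`, `P ≥ 0`,
`∑_{λ≤L} (2^λ λ!)⁻¹ ∫_Λ^{Λ₀} Λ'^{-s-1}(log^λ(max(P/κ',κ'/m)) + √λ!) dΛ'`
is bounded by `5 (Λ^{-s}/s) ∑_{λ≤L} log^λ(max(P/κ,κ/m))/(2^λ λ!)`, where `κ = max(Λ,m)`,
`κ' = max(Λ',m)`. -/
theorem stmt_7 (s : ℕ) (hs : 1 ≤ s) (m Λ Λ0 P : ℝ) (hm : 0 < m) (hΛ : 0 < Λ)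
    (hΛΛ0 : Λ ≤ Λ0) (hP : 0 ≤ P) (L : ℕ) :
    ∑ l ∈ Finset.range (L + 1), (1 / (2 ^ l * (Nat.factorial l : ℝ))) *
      ∫ t in Λ..Λ0, t ^ (-(s : ℤ) - 1) *
        (Real.log (max (P / max t m) (max t m / m)) ^ l + Real.sqrt (Nat.factorial l)) ≤
      5 * (Λ ^ (-(s : ℤ)) / s) *
        ∑ l ∈ Finset.range (L + 1),
          Real.log (max (P / max Λ m) (max Λ m / m)) ^ l / (2 ^ l * (Nat.factorial l : ℝ)) := by
  have hΛ0 : 0 < Λ0 := lt_of_lt_of_le hΛ hΛΛ0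
  have hs1 : (1:ℝ) ≤ s := by exact_mod_cast hs
  have hs0 : (0:ℝ) < s := by linarith
  set n : ℤ := -(s : ℤ) - 1 with hn
  set g : ℝ → ℝ := fun t => Real.log (max (P / max t m) (max t m / m)) with hgdef
  set a : ℝ := g Λ with hadef
  set A : ℝ := ∑ l ∈ Finset.range (L + 1), a ^ l / (2 ^ l * (Nat.factorial l : ℝ)) with hAdef
  -- basic positivity facts
  have hmaxpos : ∀ t : ℝ, 0 < max t m := fun t => lt_of_lt_of_le hm (le_max_right t m)
  have hinner1 : ∀ t : ℝ, (1:ℝ) ≤ max (P / max t m) (max t m / m) := fun t =>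
    le_trans ((one_le_div hm).mpr (le_max_right t m)) (le_max_right _ _)
  have hinnerpos : ∀ t : ℝ, (0:ℝ) < max (P / max t m) (max t m / m) := fun t =>
    lt_of_lt_of_le one_pos (hinner1 t)
  have hg0 : ∀ t : ℝ, 0 ≤ g t := fun t => Real.log_nonneg (hinner1 t)
  have ha : 0 ≤ a := hg0 Λ
  have hA1 : (1:ℝ) ≤ A := by
    have h0 : a ^ 0 / (2 ^ 0 * ((Nat.factorial 0 : ℕ) : ℝ)) = 1 := by simp
    calc (1:ℝ) = a ^ 0 / (2 ^ 0 * ((Nat.factorial 0 : ℕ) : ℝ)) := h0.symm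
      _ ≤ A := Finset.single_le_sum (f := fun l => a ^ l / (2 ^ l * (Nat.factorial l : ℝ)))
          (fun l _ => by positivity) (Finset.mem_range.mpr (Nat.succ_pos L))
  -- continuity of g
  have hmaxc : Continuous fun t : ℝ => max t m := continuous_id.max continuous_const
  have hgc : Continuous g := by
    refine Continuous.log ?_ (fun t => (hinnerpos t).ne')
    exact (continuous_const.div hmaxc (fun t => (hmaxpos t).ne')).max (hmaxc.div_const m)
  -- pointwise inequality for log
  have hgle : ∀ t, Λ ≤ t → g t ≤ a + Real.log (t / Λ) := by
    intro t htΛ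
    have ht0 : 0 < t := lt_of_lt_of_le hΛ htΛ
    have htΛ1 : (1:ℝ) ≤ t / Λ := (one_le_div hΛ).mpr htΛ
    have hmain : max (P / max t m) (max t m / m) ≤
        (max (P / max Λ m) (max Λ m / m)) * (t / Λ) := by
      refine max_le ?_ ?_
      · calc P / max t m ≤ P / max Λ m := by gcongr
          _ ≤ max (P / max Λ m) (max Λ m / m) := le_max_left _ _
          _ ≤ _ := le_mul_of_one_le_right (hinnerpos Λ).le htΛ1
      · have h1 : max t m ≤ max Λ m * (t / Λ) := by
          refine max_le ?_ ?_
          · calc t = Λ * (t / Λ) := by field_simp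
              _ ≤ max Λ m * (t / Λ) := by
                gcongr <;> first | positivity | exact le_max_left Λ m
          · exact le_trans (le_max_right Λ m) (le_mul_of_one_le_right (hmaxpos Λ).le htΛ1)
        calc max t m / m ≤ (max Λ m * (t / Λ)) / m := by gcongr
          _ = (max Λ m / m) * (t / Λ) := by ring
          _ ≤ (max (P / max Λ m) (max Λ m / m)) * (t / Λ) := by
              gcongr <;> first | positivity | exact le_max_right _ _
    calc g t ≤ Real.log ((max (P / max Λ m) (max Λ m / m)) * (t / Λ)) :=
          Real.log_le_log (hinnerpos t) hmain
      _ = a + Real.log (t / Λ) := by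
          rw [Real.log_mul (hinnerpos Λ).ne' (by positivity)]
  -- bound on the log sum
  have hS1 : ∀ t, Λ ≤ t → ∑ l ∈ range (L + 1), (1 / (2 ^ l * (Nat.factorial l : ℝ))) * g t ^ l ≤
      A * (t ^ ((2:ℝ)⁻¹) / Λ ^ ((2:ℝ)⁻¹)) := by
    intro t htΛ
    have ht0 : 0 < t := lt_of_lt_of_le hΛ htΛ
    have htΛ1 : (1:ℝ) ≤ t / Λ := (one_le_div hΛ).mpr htΛ
    set u : ℝ := Real.log (t / Λ) with hudef
    have hu : 0 ≤ u := Real.log_nonneg htΛ1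
    have hrw : ∀ (x : ℝ) (l : ℕ), (1 / (2 ^ l * (Nat.factorial l : ℝ))) * x ^ l
        = (x / 2) ^ l / (Nat.factorial l : ℝ) := by
      intro x l
      rw [div_pow, div_div]
      ring
    calc ∑ l ∈ range (L + 1), (1 / (2 ^ l * (Nat.factorial l : ℝ))) * g t ^ l
        = ∑ l ∈ range (L + 1), (g t / 2) ^ l / (Nat.factorial l : ℝ) :=
          Finset.sum_congr rfl fun l _ => hrw _ l
      _ ≤ ∑ l ∈ range (L + 1), (a / 2 + u / 2) ^ l / (Nat.factorial l : ℝ) := by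
          refine Finset.sum_le_sum fun l _ => ?_
          gcongr <;>
            first
              | exact div_nonneg (hg0 t) (by norm_num)
              | linarith [hgle t htΛ]
      _ ≤ (∑ j ∈ range (L + 1), (a / 2) ^ j / (Nat.factorial j : ℝ)) * Real.exp (u / 2) :=
          tri_aux (a / 2) (u / 2) (by positivity) (by positivity) _
      _ = A * Real.exp (u / 2) := by
          rw [hAdef]
          congr 1
          refine Finset.sum_congr rfl fun l _ => ?_
          rw [← hrw a l]
          ring
      _ = A * (t ^ ((2:ℝ)⁻¹) / Λ ^ ((2:ℝ)⁻¹)) := by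
          congr 1
          rw [← Real.div_rpow ht0.le hΛ.le,
            Real.rpow_def_of_pos (div_pos ht0 hΛ), hudef]
          ring_nf
  -- bound on the sqrt sum
  have hS2 : ∑ l ∈ range (L + 1), (1 / (2 ^ l * (Nat.factorial l : ℝ))) *
      Real.sqrt (Nat.factorial l) ≤ 2 := by
    have hterm : ∀ l : ℕ, (1 / (2 ^ l * (Nat.factorial l : ℝ))) *
        Real.sqrt (Nat.factorial l) ≤ ((2:ℝ)⁻¹) ^ l := by
      intro l
      have hf1 : (1:ℝ) ≤ (Nat.factorial l : ℝ) := by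
        exact_mod_cast Nat.one_le_iff_ne_zero.mpr (Nat.factorial_ne_zero l)
      have hsq : Real.sqrt (Nat.factorial l) ≤ (Nat.factorial l : ℝ) := by
        nlinarith [Real.sq_sqrt (show (0:ℝ) ≤ (Nat.factorial l : ℝ) by positivity),
          Real.sqrt_nonneg ((Nat.factorial l : ℕ) : ℝ)]
      calc (1 / (2 ^ l * (Nat.factorial l : ℝ))) * Real.sqrt (Nat.factorial l)
          ≤ (1 / (2 ^ l * (Nat.factorial l : ℝ))) * (Nat.factorial l : ℝ) := by
            gcongr
          _ = ((2:ℝ)⁻¹) ^ l := by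
            rw [inv_pow]
            field_simp
    calc ∑ l ∈ range (L + 1), (1 / (2 ^ l * (Nat.factorial l : ℝ))) *
        Real.sqrt (Nat.factorial l) ≤ ∑ l ∈ range (L + 1), ((2:ℝ)⁻¹) ^ l :=
          Finset.sum_le_sum fun l _ => hterm l
      _ ≤ 2 := by
        rw [geom_sum_eq (by norm_num : (2:ℝ)⁻¹ ≠ 1)]
        have h1 : (0:ℝ) ≤ ((2:ℝ)⁻¹) ^ (L + 1) := by positivity
        have h2 : (((2:ℝ)⁻¹) ^ (L + 1) - 1) / ((2:ℝ)⁻¹ - 1) =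
            2 - 2 * ((2:ℝ)⁻¹) ^ (L + 1) := by
          rw [div_eq_iff (by norm_num : ((2:ℝ)⁻¹ - 1) ≠ 0)]
          ring
        rw [h2]
        linarith
  -- the comparison function
  set e : ℝ := -(s:ℝ) - 1 + 2⁻¹ with hedef
  set φ : ℝ → ℝ := fun t => (A / Λ ^ ((2:ℝ)⁻¹)) * t ^ e + 2 * t ^ n with hφdef
  have huIcc : Set.uIcc Λ Λ0 = Set.Icc Λ Λ0 := Set.uIcc_of_le hΛΛ0
  have hposIcc : ∀ x ∈ Set.uIcc Λ Λ0, (0:ℝ) < x := by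
    intro x hx
    rw [huIcc] at hx
    exact lt_of_lt_of_le hΛ hx.1
  -- continuity / integrability
  have hcont : ∀ l ∈ range (L + 1), ContinuousOn
      (fun t : ℝ => (1 / (2 ^ l * (Nat.factorial l : ℝ))) *
        (t ^ n * (g t ^ l + Real.sqrt (Nat.factorial l)))) (Set.uIcc Λ Λ0) := by
    intro l _
    refine continuousOn_const.mul (ContinuousOn.mul ?_ ?_)
    · exact continuousOn_id.zpow₀ n (fun x hx => Or.inl (hposIcc x hx).ne')
    · exact ((hgc.continuousOn.pow l).add continuousOn_const)
  have hFint : IntervalIntegrable (fun t : ℝ => ∑ l ∈ range (L + 1),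
      (1 / (2 ^ l * (Nat.factorial l : ℝ))) *
        (t ^ n * (g t ^ l + Real.sqrt (Nat.factorial l)))) MeasureTheory.volume Λ Λ0 :=
    (continuousOn_finset_sum _ hcont).intervalIntegrable
  have hint1 : IntervalIntegrable (fun t : ℝ => (A / Λ ^ ((2:ℝ)⁻¹)) * t ^ e)
      MeasureTheory.volume Λ Λ0 :=
    (continuousOn_const.mul (ContinuousOn.rpow_const continuousOn_id
      (fun x hx => Or.inl (hposIcc x hx).ne'))).intervalIntegrable
  have hint2 : IntervalIntegrable (fun t : ℝ => 2 * t ^ n) MeasureTheory.volume Λ Λ0 :=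
    (continuousOn_const.mul (continuousOn_id.zpow₀ n
      (fun x hx => Or.inl (hposIcc x hx).ne'))).intervalIntegrable
  have hφint : IntervalIntegrable φ MeasureTheory.volume Λ Λ0 := hint1.add hint2
  -- pointwise comparison
  have hpt : ∀ t ∈ Set.Icc Λ Λ0, (∑ l ∈ range (L + 1),
      (1 / (2 ^ l * (Nat.factorial l : ℝ))) *
        (t ^ n * (g t ^ l + Real.sqrt (Nat.factorial l)))) ≤ φ t := by
    intro t ht
    have htΛ : Λ ≤ t := ht.1
    have ht0 : 0 < t := lt_of_lt_of_le hΛ htΛ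
    have htn : (0:ℝ) ≤ t ^ n := (zpow_pos ht0 n).le
    have hexp : (∑ l ∈ range (L + 1), (1 / (2 ^ l * (Nat.factorial l : ℝ))) *
        (t ^ n * (g t ^ l + Real.sqrt (Nat.factorial l)))) =
        t ^ n * ((∑ l ∈ range (L + 1), (1 / (2 ^ l * (Nat.factorial l : ℝ))) * g t ^ l) +
          (∑ l ∈ range (L + 1), (1 / (2 ^ l * (Nat.factorial l : ℝ))) *
            Real.sqrt (Nat.factorial l))) := by
      rw [← Finset.sum_add_distrib, Finset.mul_sum]
      exact Finset.sum_congr rfl fun l _ => by ring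
    rw [hexp]
    have hzrw : (t:ℝ) ^ n = t ^ (-(s:ℝ) - 1) := by
      rw [show (-(s:ℝ) - 1) = ((n : ℤ) : ℝ) by rw [hn]; push_cast; ring, Real.rpow_intCast]
    have hte : t ^ e = t ^ (-(s:ℝ) - 1) * t ^ ((2:ℝ)⁻¹) := by
      rw [hedef, Real.rpow_add ht0]
    calc t ^ n * ((∑ l ∈ range (L + 1), (1 / (2 ^ l * (Nat.factorial l : ℝ))) * g t ^ l) +
          (∑ l ∈ range (L + 1), (1 / (2 ^ l * (Nat.factorial l : ℝ))) *
            Real.sqrt (Nat.factorial l)))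
        ≤ t ^ n * ((A * (t ^ ((2:ℝ)⁻¹) / Λ ^ ((2:ℝ)⁻¹))) + 2) :=
          mul_le_mul_of_nonneg_left (add_le_add (hS1 t htΛ) hS2) htn
      _ = φ t := by
          rw [hφdef]
          simp only
          rw [hte, hzrw]
          have hΛr : (0:ℝ) < Λ ^ ((2:ℝ)⁻¹) := rpow_pos_of_pos hΛ _
          field_simp
  -- main chain
  have hnm : (0:ℝ) ∉ Set.uIcc Λ Λ0 := Set.notMem_uIcc_of_lt hΛ hΛ0
  have hI1 : ∫ t in Λ..Λ0, t ^ e ≤ 2 * Λ ^ ((2:ℝ)⁻¹ - s) / s := by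
    rw [hedef, integral_rpow (Or.inr ⟨by intro h; norm_num at h; linarith, hnm⟩)]
    have he : -(s:ℝ) - 1 + 2⁻¹ + 1 = 2⁻¹ - s := by ring
    rw [he]
    have h1 : (0:ℝ) < Λ ^ ((2:ℝ)⁻¹ - s) := rpow_pos_of_pos hΛ _
    have h2 : (0:ℝ) ≤ Λ0 ^ ((2:ℝ)⁻¹ - s) := (rpow_pos_of_pos hΛ0 _).le
    have hrw2 : (Λ0 ^ ((2:ℝ)⁻¹ - s) - Λ ^ ((2:ℝ)⁻¹ - s)) / (2⁻¹ - (s:ℝ)) =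
        (Λ ^ ((2:ℝ)⁻¹ - s) - Λ0 ^ ((2:ℝ)⁻¹ - s)) / ((s:ℝ) - 2⁻¹) := by
      rw [div_eq_div_iff (by linarith) (by linarith)]; ring
    rw [hrw2, div_le_div_iff₀ (by linarith) hs0]
    nlinarith
  have hI2 : ∫ t in Λ..Λ0, t ^ n ≤ Λ ^ (-(s:ℤ)) / s := by
    rw [hn, integral_zpow (Or.inr ⟨by omega, hnm⟩)]
    have he : -(s:ℤ) - 1 + 1 = -(s:ℤ) := by ring
    rw [he]
    have h1 : (0:ℝ) < Λ ^ (-(s:ℤ)) := zpow_pos hΛ _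
    have h2 : (0:ℝ) ≤ Λ0 ^ (-(s:ℤ)) := (zpow_pos hΛ0 _).le
    push_cast
    have he2 : (-(s:ℝ) - 1 + 1) = -(s:ℝ) := by ring
    rw [he2]
    have hrw2 : (Λ0 ^ (-(s:ℤ)) - Λ ^ (-(s:ℤ))) / (-(s:ℝ)) =
        (Λ ^ (-(s:ℤ)) - Λ0 ^ (-(s:ℤ))) / ((s:ℝ)) := by
      rw [div_eq_div_iff (by linarith) (by linarith)]; ring
    rw [hrw2, div_le_div_iff₀ hs0 hs0]
    nlinarith
  have hΛz : (0:ℝ) < Λ ^ (-(s:ℤ)) := zpow_pos hΛ _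
  have hΛhalf : (0:ℝ) < Λ ^ ((2:ℝ)⁻¹) := rpow_pos_of_pos hΛ _
  have hΛsplit : Λ ^ ((2:ℝ)⁻¹ - s) = Λ ^ ((2:ℝ)⁻¹) * Λ ^ (-(s:ℤ)) := by
    rw [show ((2:ℝ)⁻¹ - s) = (2:ℝ)⁻¹ + (((-(s:ℤ)) : ℤ) : ℝ) by push_cast; ring,
      Real.rpow_add hΛ, Real.rpow_intCast]
  calc ∑ l ∈ Finset.range (L + 1), (1 / (2 ^ l * (Nat.factorial l : ℝ))) *
      ∫ t in Λ..Λ0, t ^ n * (g t ^ l + Real.sqrt (Nat.factorial l))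
      = ∑ l ∈ Finset.range (L + 1), ∫ t in Λ..Λ0,
          (1 / (2 ^ l * (Nat.factorial l : ℝ))) *
            (t ^ n * (g t ^ l + Real.sqrt (Nat.factorial l))) :=
        Finset.sum_congr rfl fun l _ => (intervalIntegral.integral_const_mul _ _).symm
    _ = ∫ t in Λ..Λ0, ∑ l ∈ Finset.range (L + 1),
          (1 / (2 ^ l * (Nat.factorial l : ℝ))) *
            (t ^ n * (g t ^ l + Real.sqrt (Nat.factorial l))) :=
        (intervalIntegral.integral_finset_sum
          (fun l hl => (hcont l hl).intervalIntegrable)).symm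
    _ ≤ ∫ t in Λ..Λ0, φ t := intervalIntegral.integral_mono_on hΛΛ0 hFint hφint hpt
    _ = (A / Λ ^ ((2:ℝ)⁻¹)) * (∫ t in Λ..Λ0, t ^ e) + 2 * ∫ t in Λ..Λ0, t ^ n := by
        rw [hφdef]
        rw [intervalIntegral.integral_add hint1 hint2,
          intervalIntegral.integral_const_mul, intervalIntegral.integral_const_mul]
    _ ≤ (A / Λ ^ ((2:ℝ)⁻¹)) * (2 * Λ ^ ((2:ℝ)⁻¹ - s) / s) + 2 * (Λ ^ (-(s:ℤ)) / s) := by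
        have hA0 : (0:ℝ) ≤ A / Λ ^ ((2:ℝ)⁻¹) :=
          div_nonneg (by linarith) (rpow_pos_of_pos hΛ _).le
        exact add_le_add (mul_le_mul_of_nonneg_left hI1 hA0)
          (mul_le_mul_of_nonneg_left hI2 (by norm_num : (0:ℝ) ≤ 2))
    _ = 2 * A * (Λ ^ (-(s:ℤ)) / s) + 2 * (Λ ^ (-(s:ℤ)) / s) := by
        rw [hΛsplit]
        field_simp
    _ ≤ 5 * (Λ ^ (-(s:ℤ)) / s) * A := by
        have hZ : (0:ℝ) ≤ Λ ^ (-(s:ℤ)) / s := (div_pos hΛz hs0).le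
        nlinarith [mul_nonneg hZ (sub_nonneg.mpr hA1), hZ]
end

section
/- Let $\mu,\lambda\in\mathbb{N}$, $\Lambda'>0$, $m>0$ and set $\kappa':=\max(\Lambda',m)$. Then $\int_{\mathbb{R}^4}\frac{d^4k}{(2\pi)^4\,\Lambda'^4}\,\Big(\frac{|k|}{\Lambda'}\Big)^{\mu}\,\log^{\lambda}\Big(\max\big(\tfrac{|k|}{\kappa'},\tfrac{\kappa'}{m}\big)\Big)\,e^{-\frac{|k|^2}{\Lambda'^2}} \;\le\; 2^{\mu/2}\,\Gamma\big(\tfrac{\mu}{2}+1\big)\,\Big(\log^{\lambda}\big(\tfrac{\kappa'}{m}\big)+\sqrt{\lambda!}\Big)$, where $\Gamma$ is the Gamma function. -/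
/-!
Write `t = |k|/Λ'`, `b = κ'/m ≥ 1` and `c = Λ'/κ' ≤ 1`; in polar coordinates the left side is
`(8π²)⁻¹ ∫₀^∞ t^(μ+3) log^λ(max(ct, b)) e^{-t²} dt`. Where `ct ≤ b` the logarithm is `log b`.
Where `ct > b` we have `t ≥ 1` and `log(ct) ≤ L := log t`, and two elementary bounds,
`L^λ ≤ √λ! e^{L²/2}` (from `(L²)^λ/λ! ≤ e^{L²}`) and `t² e^{L²/2} ≤ e^{t²/2}`, leave
`√λ! t^(μ+1) e^{-t²/2}`. Both dominating functions are Gaussian moments, given by `Γ`.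
-/

open Real MeasureTheory Set
open scoped Nat

theorem pow_le_sqrt_factorial_mul_exp (n : ℕ) {L : ℝ} (hL : 0 ≤ L) :
    L ^ n ≤ √(n ! : ℝ) * exp (L ^ 2 / 2) := by
  have h := pow_div_factorial_le_exp _ (sq_nonneg L) n
  rw [div_le_iff₀ (by positivity)] at h
  calc L ^ n = √((L ^ 2) ^ n) := by rw [← pow_mul, mul_comm, pow_mul, sqrt_sq (by positivity)]
    _ ≤ √(exp (L ^ 2) * n !) := sqrt_le_sqrt h
    _ = √(n ! : ℝ) * exp (L ^ 2 / 2) := by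
      rw [sqrt_mul' _ (by positivity), mul_comm, ← exp_half]

theorem sq_mul_exp_log_sq_le {t : ℝ} (ht : 1 ≤ t) :
    t ^ 2 * exp (log t ^ 2 / 2) ≤ exp (t ^ 2 / 2) := by
  set L := log t with hL
  have hL0 : 0 ≤ L := log_nonneg ht
  have ht2 : t ^ 2 = exp (2 * L) := by
    rw [hL, ← log_rpow (by linarith), exp_log (by positivity), rpow_two]
  -- `4L + L² ≤ 1 + 2L + 2L² ≤ exp (2L)`, the gap being `(L - 1)²`
  have hquad := quadratic_le_exp_of_nonneg (by positivity : 0 ≤ 2 * L)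
  rw [ht2, ← exp_add, exp_le_exp]
  nlinarith [sq_nonneg (L - 1)]

theorem sq_mul_log_pow_mul_exp_neg_sq_le (n : ℕ) {t : ℝ} (ht : 1 ≤ t) :
    t ^ 2 * log t ^ n * exp (-t ^ 2) ≤ √(n ! : ℝ) * exp (-t ^ 2 / 2) := by
  have hlog := pow_le_sqrt_factorial_mul_exp n (log_nonneg ht)
  calc t ^ 2 * log t ^ n * exp (-t ^ 2)
      ≤ t ^ 2 * (√(n ! : ℝ) * exp (log t ^ 2 / 2)) * exp (-t ^ 2) := by gcongr
    _ = √(n ! : ℝ) * (t ^ 2 * exp (log t ^ 2 / 2)) * exp (-t ^ 2) := by ring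
    _ ≤ √(n ! : ℝ) * exp (t ^ 2 / 2) * exp (-t ^ 2) := by
      gcongr; exact sq_mul_exp_log_sq_le ht
    _ = √(n ! : ℝ) * exp (-t ^ 2 / 2) := by rw [mul_assoc, ← exp_add]; ring_nf

theorem integral_pow_mul_exp_neg_mul_sq (n : ℕ) {b : ℝ} (hb : 0 < b) :
    ∫ t in Ioi (0 : ℝ), t ^ n * exp (-b * t ^ 2) =
      b ^ (-((n : ℝ) + 1) / 2) * (1 / 2) * Gamma (((n : ℝ) + 1) / 2) := by
  rw [← integral_rpow_mul_exp_neg_mul_rpow two_pos (by linarith [n.cast_nonneg (α := ℝ)]) hb]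
  simp only [rpow_natCast, rpow_two]

theorem integrableOn_pow_mul_exp_neg_mul_sq (n : ℕ) {b : ℝ} (hb : 0 < b) :
    IntegrableOn (fun t : ℝ ↦ t ^ n * exp (-b * t ^ 2)) (Ioi 0) := by
  simpa only [rpow_natCast] using
    integrableOn_rpow_mul_exp_neg_mul_sq hb (by linarith [n.cast_nonneg (α := ℝ)] : (-1 : ℝ) < n)

theorem pow_mul_log_max_pow_mul_exp_le (μ n : ℕ) {b c t : ℝ} (hb : 1 ≤ b) (hc : c ≤ 1)
    (ht : 0 ≤ t) :
    t ^ 3 * (t ^ μ * log (max (c * t) b) ^ n * exp (-t ^ 2)) ≤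
      log b ^ n * (t ^ (μ + 3) * exp (-1 * t ^ 2)) +
        √(n ! : ℝ) * (t ^ (μ + 1) * exp (-(1 / 2) * t ^ 2)) := by
  have hlogb : 0 ≤ log b := log_nonneg hb
  rcases le_or_gt (c * t) b with hct | hct
  · rw [max_eq_right hct]
    have : 0 ≤ √(n ! : ℝ) * (t ^ (μ + 1) * exp (-(1 / 2) * t ^ 2)) := by positivity
    linarith [show t ^ 3 * (t ^ μ * log b ^ n * exp (-t ^ 2)) =
      log b ^ n * (t ^ (μ + 3) * exp (-1 * t ^ 2)) by ring_nf]
  · rw [max_eq_left hct.le]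
    have hct1 : 1 ≤ c * t := hb.trans hct.le
    have ht1 : 1 ≤ t := hct1.trans (by nlinarith)
    have hlog : log (c * t) ^ n ≤ log t ^ n :=
      pow_le_pow_left₀ (log_nonneg hct1) (log_le_log (by linarith) (by nlinarith)) n
    have : 0 ≤ log b ^ n * (t ^ (μ + 3) * exp (-1 * t ^ 2)) := by positivity
    calc t ^ 3 * (t ^ μ * log (c * t) ^ n * exp (-t ^ 2))
        ≤ t ^ (μ + 1) * (t ^ 2 * log t ^ n * exp (-t ^ 2)) := by
          rw [show t ^ (μ + 1) * (t ^ 2 * log t ^ n * exp (-t ^ 2)) =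
            t ^ 3 * (t ^ μ * log t ^ n * exp (-t ^ 2)) by ring]
          gcongr
      _ ≤ t ^ (μ + 1) * (√(n ! : ℝ) * exp (-t ^ 2 / 2)) :=
          mul_le_mul_of_nonneg_left (sq_mul_log_pow_mul_exp_neg_sq_le n ht1) (by positivity)
      _ ≤ _ := by
          rw [show -(1 / 2) * t ^ 2 = -t ^ 2 / 2 by ring]
          linarith [show t ^ (μ + 1) * (√(n ! : ℝ) * exp (-t ^ 2 / 2)) =
            √(n ! : ℝ) * (t ^ (μ + 1) * exp (-t ^ 2 / 2)) by ring]

theorem setIntegral_pow_mul_log_max_pow_mul_exp_le (μ n : ℕ) {b c : ℝ} (hb : 1 ≤ b)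
    (hc : c ≤ 1) :
    ∫ t in Ioi (0 : ℝ), t ^ 3 * (t ^ μ * log (max (c * t) b) ^ n * exp (-t ^ 2)) ≤
      Gamma ((μ : ℝ) / 2 + 1) * (((μ : ℝ) / 2 + 1) / 2 * log b ^ n + √2 ^ μ * √(n ! : ℝ)) := by
  have hmoment₁ : ∫ t in Ioi (0 : ℝ), t ^ (μ + 3) * exp (-1 * t ^ 2) =
      ((μ : ℝ) / 2 + 1) / 2 * Gamma ((μ : ℝ) / 2 + 1) := by
    rw [integral_pow_mul_exp_neg_mul_sq _ one_pos, one_rpow,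
      show (((μ + 3 : ℕ) : ℝ) + 1) / 2 = (μ : ℝ) / 2 + 1 + 1 by push_cast; ring,
      Gamma_add_one (by positivity)]
    ring
  have hmoment₂ : ∫ t in Ioi (0 : ℝ), t ^ (μ + 1) * exp (-(1 / 2) * t ^ 2) =
      √2 ^ μ * Gamma ((μ : ℝ) / 2 + 1) := by
    rw [integral_pow_mul_exp_neg_mul_sq _ (by norm_num),
      show -(((μ + 1 : ℕ) : ℝ) + 1) / 2 = -((μ : ℝ) / 2 + 1) by push_cast; ring,
      show (((μ + 1 : ℕ) : ℝ) + 1) / 2 = (μ : ℝ) / 2 + 1 by push_cast; ring,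
      one_div, inv_rpow zero_le_two, ← rpow_neg zero_le_two, neg_neg,
      rpow_add two_pos, rpow_one, sqrt_eq_rpow, ← rpow_natCast, ← rpow_mul zero_le_two]
    ring_nf
  calc ∫ t in Ioi (0 : ℝ), t ^ 3 * (t ^ μ * log (max (c * t) b) ^ n * exp (-t ^ 2))
      ≤ ∫ t in Ioi (0 : ℝ), log b ^ n * (t ^ (μ + 3) * exp (-1 * t ^ 2)) +
          √(n ! : ℝ) * (t ^ (μ + 1) * exp (-(1 / 2) * t ^ 2)) := by
        refine integral_mono_of_nonneg ?_ ?_ ?_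
        · filter_upwards [ae_restrict_mem measurableSet_Ioi] with t (ht : 0 < t)
          have := log_nonneg (hb.trans (le_max_right (c * t) b))
          positivity
        · exact ((integrableOn_pow_mul_exp_neg_mul_sq _ one_pos).const_mul _).add
            ((integrableOn_pow_mul_exp_neg_mul_sq _ (by norm_num)).const_mul _)
        · filter_upwards [ae_restrict_mem measurableSet_Ioi] with t (ht : 0 < t)
          exact pow_mul_log_max_pow_mul_exp_le μ n hb hc ht.le
    _ = _ := by
        rw [integral_add ((integrableOn_pow_mul_exp_neg_mul_sq _ one_pos).const_mul _)
            ((integrableOn_pow_mul_exp_neg_mul_sq _ (by norm_num)).const_mul _),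
          integral_const_mul, integral_const_mul, hmoment₁, hmoment₂]
        ring

theorem integral_fun_norm_euclideanSpace_fin_four (f : ℝ → ℝ) :
    ∫ k : EuclideanSpace ℝ (Fin 4), f ‖k‖ = 2 * π ^ 2 * ∫ y in Ioi (0 : ℝ), y ^ 3 * f y := by
  have hball : volume.real (Metric.ball (0 : EuclideanSpace ℝ (Fin 4)) 1) = π ^ 2 / 2 := by
    have hΓ : Gamma ((4 : ℕ) / 2 + 1) = 2 := by
      rw [show ((4 : ℕ) : ℝ) / 2 + 1 = (2 : ℕ) + 1 by norm_num, Gamma_nat_eq_factorial]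
      norm_num [Nat.factorial]
    rw [measureReal_def, EuclideanSpace.volume_ball, Fintype.card_fin, hΓ,
      show √π ^ 4 = π ^ 2 by rw [show 4 = 2 * 2 from rfl, pow_mul, sq_sqrt pi_pos.le]]
    simp only [ENNReal.ofReal_one, one_pow, one_mul]
    exact ENNReal.toReal_ofReal (by positivity)
  rw [integral_fun_norm_addHaar volume f, finrank_euclideanSpace_fin, hball]
  simp only [nsmul_eq_mul, smul_eq_mul]
  norm_num
  ring

theorem integral_fun_norm_div_euclideanSpace_fin_four (f : ℝ → ℝ) {Λ : ℝ} (hΛ : 0 ≤ Λ) :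
    ∫ k : EuclideanSpace ℝ (Fin 4), f (‖k‖ / Λ) =
      Λ ^ 4 * (2 * π ^ 2 * ∫ y in Ioi (0 : ℝ), y ^ 3 * f y) := by
  calc ∫ k : EuclideanSpace ℝ (Fin 4), f (‖k‖ / Λ)
      = ∫ k : EuclideanSpace ℝ (Fin 4), f ‖Λ⁻¹ • k‖ := by
        congr 1 with k
        rw [norm_smul, norm_inv, Real.norm_of_nonneg hΛ, inv_mul_eq_div]
    _ = _ := by
        rw [Measure.integral_comp_inv_smul_of_nonneg volume (fun k ↦ f ‖k‖) hΛ,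
          finrank_euclideanSpace_fin, smul_eq_mul, integral_fun_norm_euclideanSpace_fin_four]

theorem div_two_add_one_le_two_mul_sqrt_two_pow (μ : ℕ) : (μ : ℝ) / 2 + 1 ≤ 2 * √2 ^ μ := by
  have h54 : (5 / 4 : ℝ) ≤ √2 := le_sqrt_of_sq_le (by norm_num)
  have hbernoulli := one_add_mul_le_pow (a := (1 / 4 : ℝ)) (by norm_num) μ
  have := pow_le_pow_left₀ (by norm_num) h54 μ
  norm_num at hbernoulli this ⊢
  linarith

/-- The single Gaussian momentum integral bound with the Gamma function:
`∫_k (|k|/Λ')^μ log^λ(max(|k|/κ',κ'/m)) e^{-|k|²/Λ'²} d⁴k/((2π)⁴Λ'⁴)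
  ≤ 2^{μ/2} Γ(μ/2+1) (log^λ(κ'/m) + √λ!)` where `κ' = max(Λ',m)`. -/
theorem stmt_11 (μ lam : ℕ) (Λ' m : ℝ) (hΛ' : 0 < Λ') (hm : 0 < m) :
    (1 / ((2 * Real.pi) ^ 4 * Λ' ^ 4)) *
      ∫ k : EuclideanSpace ℝ (Fin 4),
        (‖k‖ / Λ') ^ μ * Real.log (max (‖k‖ / max Λ' m) (max Λ' m / m)) ^ lam *
          Real.exp (-‖k‖ ^ 2 / Λ' ^ 2) ≤
      Real.sqrt 2 ^ μ * Real.Gamma ((μ : ℝ) / 2 + 1) *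
        (Real.log (max Λ' m / m) ^ lam + Real.sqrt (Nat.factorial lam)) := by
  set κ := max Λ' m
  have hb : 1 ≤ κ / m := (one_le_div hm).mpr (le_max_right _ _)
  have hκ : 0 < κ := hΛ'.trans_le (le_max_left _ _)
  have hlog : 0 ≤ log (κ / m) ^ lam := pow_nonneg (log_nonneg hb) _
  set F : ℝ → ℝ := fun t ↦ t ^ μ * log (max (Λ' / κ * t) (κ / m)) ^ lam * exp (-t ^ 2)
  have hrescale : ∀ k : EuclideanSpace ℝ (Fin 4),
      (‖k‖ / Λ') ^ μ * log (max (‖k‖ / κ) (κ / m)) ^ lam * exp (-‖k‖ ^ 2 / Λ' ^ 2) =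
        F (‖k‖ / Λ') := by
    intro k
    simp only [F]
    field_simp
  have hI := setIntegral_pow_mul_log_max_pow_mul_exp_le μ lam hb
    (div_le_one_of_le₀ (le_max_left Λ' m) hκ.le)
  have hμ := div_two_add_one_le_two_mul_sqrt_two_pow μ
  have hπ : 1 ≤ π ^ 2 := by nlinarith [pi_gt_three]
  rw [integral_congr_ae (Filter.Eventually.of_forall hrescale),
    integral_fun_norm_div_euclideanSpace_fin_four F hΛ'.le]
  calc 1 / ((2 * π) ^ 4 * Λ' ^ 4) * (Λ' ^ 4 * (2 * π ^ 2 * ∫ t in Ioi (0 : ℝ), t ^ 3 * F t))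
      = (∫ t in Ioi (0 : ℝ), t ^ 3 * F t) / (8 * π ^ 2) := by field_simp; ring
    _ ≤ _ := by
      rw [div_le_iff₀ (by positivity)]
      calc (∫ t in Ioi (0 : ℝ), t ^ 3 * F t)
          ≤ Gamma ((μ : ℝ) / 2 + 1) *
              (((μ : ℝ) / 2 + 1) / 2 * log (κ / m) ^ lam + √2 ^ μ * √(lam ! : ℝ)) := hI
        _ ≤ Gamma ((μ : ℝ) / 2 + 1) * (√2 ^ μ * log (κ / m) ^ lam + √2 ^ μ * √(lam ! : ℝ)) := by
          gcongr; linarith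
        _ ≤ √2 ^ μ * Gamma ((μ : ℝ) / 2 + 1) * (log (κ / m) ^ lam + √(lam ! : ℝ)) *
              (8 * π ^ 2) := by
          rw [← mul_add, ← mul_assoc, mul_comm (Gamma _)]
          exact le_mul_of_one_le_right (by positivity) (by linarith)
end

section
/- Let $m>0$ and let $a\in\mathbb{Z}$ be an integer. Then $\int_{0}^{m} e^{-m^2/t^2}\, t^{a-1}\, dt \;\le\; m^{a}\,\sqrt{\max(-a,0)!}$. -/
/-!
Writing `x = m² / t²`, the bound `e^{-x} xⁿ ≤ n!` turns the integrand into at most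
`n! m^{-2n} t^{2n+a-1}`, whose integral over `[0, m]` is `n! mᵃ / (2n + a)` as soon as
`2n + a > 0`. For `a ≥ 1` take `n = 0`; for `a = -k ≤ 0` take `n = ⌊k/2⌋ + 1`, so that
`2n + a ∈ {1, 2}`, and `(n!)² ≤ (2n + a)² k!` is an elementary factorial inequality.
-/

open Real MeasureTheory Set
open scoped Nat

lemma exp_neg_mul_pow_le_factorial {x : ℝ} (hx : 0 ≤ x) (n : ℕ) : exp (-x) * x ^ n ≤ n ! := by
  have h := pow_div_factorial_le_exp x hx n
  rw [div_le_iff₀ (by positivity)] at h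
  rw [exp_neg, inv_mul_le_iff₀ (exp_pos x)]
  linarith

lemma exp_neg_sq_div_sq_mul_zpow_le {m t : ℝ} (hm : m ≠ 0) (ht : 0 < t) (b : ℤ) (n : ℕ) :
    exp (-m ^ 2 / t ^ 2) * t ^ b ≤ n ! / m ^ (2 * n) * t ^ (2 * n + b) := by
  have hexp := exp_neg_mul_pow_le_factorial (by positivity : 0 ≤ m ^ 2 / t ^ 2) n
  have hsplit : t ^ (2 * (n : ℤ) + b) = t ^ (2 * n) * t ^ b := by
    rw [zpow_add₀ ht.ne', ← zpow_natCast]; push_cast; rfl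
  rw [hsplit, neg_div]
  calc exp (-(m ^ 2 / t ^ 2)) * t ^ b
      = exp (-(m ^ 2 / t ^ 2)) * (m ^ 2 / t ^ 2) ^ n * (t ^ 2 / m ^ 2) ^ n * t ^ b := by
        rw [mul_assoc _ ((m ^ 2 / t ^ 2) ^ n), ← mul_pow, div_mul_div_comm, mul_comm (m ^ 2),
          div_self (by positivity), one_pow, mul_one]
    _ ≤ n ! * (t ^ 2 / m ^ 2) ^ n * t ^ b := by gcongr
    _ = n ! / m ^ (2 * n) * (t ^ (2 * n) * t ^ b) := by rw [div_pow, ← pow_mul, ← pow_mul]; ring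

lemma integral_exp_neg_sq_div_sq_mul_zpow_le {m : ℝ} (hm : 0 < m) (a : ℤ) (n : ℕ)
    (h : 0 < 2 * (n : ℤ) + a) :
    ∫ t in (0 : ℝ)..m, exp (-m ^ 2 / t ^ 2) * t ^ (a - 1) ≤
      n ! / ((2 * n + a : ℤ) : ℝ) * m ^ a := by
  set g : ℝ → ℝ := fun t ↦ n ! / m ^ (2 * n) * t ^ (2 * (n : ℤ) + (a - 1))
  have hg_le : ∀ t ∈ Ioc 0 m, exp (-m ^ 2 / t ^ 2) * t ^ (a - 1) ≤ g t := fun t ht ↦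
    exp_neg_sq_div_sq_mul_zpow_le hm.ne' ht.1 (a - 1) n
  have hg_int : IntervalIntegrable g volume 0 m :=
    (intervalIntegral.intervalIntegrable_zpow (Or.inl (by omega))).const_mul _
  have hf_int : IntervalIntegrable (fun t ↦ exp (-m ^ 2 / t ^ 2) * t ^ (a - 1)) volume 0 m := by
    refine hg_int.mono_fun' (by fun_prop) ?_
    rw [uIoc_of_le hm.le]
    filter_upwards [ae_restrict_mem measurableSet_Ioc] with t ht
    rw [norm_of_nonneg (by have := ht.1; positivity)]
    exact hg_le t ht
  calc ∫ t in (0 : ℝ)..m, exp (-m ^ 2 / t ^ 2) * t ^ (a - 1)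
      ≤ ∫ t in (0 : ℝ)..m, g t :=
        intervalIntegral.integral_mono_on_of_le_Ioo hm.le hf_int hg_int
          fun t ht ↦ hg_le t (Ioo_subset_Ioc_self ht)
    _ = n ! / ((2 * n + a : ℤ) : ℝ) * m ^ a := by
      rw [intervalIntegral.integral_const_mul, integral_zpow (Or.inl (by omega))]
      have : 2 * (n : ℤ) + (a - 1) + 1 = 2 * n + a := by ring
      rw [this, zero_zpow _ h.ne', sub_zero, zpow_add₀ hm.ne', ← zpow_natCast]
      push_cast
      field_simp
      ring

lemma sq_factorial_succ_le_factorial_two_mul_add_one (j : ℕ) : (j + 1)! ^ 2 ≤ (2 * j + 1)! := by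
  induction j with
  | zero => rfl
  | succ j ih =>
    have hstep : (j + 2) ^ 2 ≤ (2 * j + 3) * (2 * j + 2) := by nlinarith
    calc (j + 1 + 1)! ^ 2 = (j + 2) ^ 2 * (j + 1)! ^ 2 := by rw [Nat.factorial_succ]; ring
      _ ≤ (2 * j + 3) * (2 * j + 2) * (2 * j + 1)! := Nat.mul_le_mul hstep ih
      _ = (2 * (j + 1) + 1)! := by
        rw [show 2 * (j + 1) + 1 = 2 * j + 1 + 1 + 1 by ring, Nat.factorial_succ (2 * j + 1 + 1),
          Nat.factorial_succ (2 * j + 1)]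
        ring

lemma sq_factorial_succ_le_four_mul_factorial_two_mul (j : ℕ) : (j + 1)! ^ 2 ≤ 4 * (2 * j)! := by
  induction j with
  | zero => decide
  | succ j ih =>
    rcases j with _ | j
    · decide
    have hstep : (j + 3) ^ 2 ≤ (2 * j + 4) * (2 * j + 3) := by nlinarith
    calc (j + 1 + 1 + 1)! ^ 2 = (j + 3) ^ 2 * (j + 1 + 1)! ^ 2 := by
          rw [Nat.factorial_succ (j + 1 + 1)]; ring
      _ ≤ (2 * j + 4) * (2 * j + 3) * (4 * (2 * (j + 1))!) := Nat.mul_le_mul hstep ih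
      _ = 4 * (2 * (j + 1 + 1))! := by
        rw [show 2 * (j + 1 + 1) = 2 * (j + 1) + 1 + 1 by ring, Nat.factorial_succ (2 * (j + 1) + 1),
          Nat.factorial_succ (2 * (j + 1))]
        ring

lemma exists_factorial_div_le_sqrt_factorial (a : ℤ) :
    ∃ n : ℕ, 0 < 2 * (n : ℤ) + a ∧ (n ! : ℝ) / ((2 * n + a : ℤ) : ℝ) ≤ √((-a).toNat !) := by
  rcases lt_or_ge 0 a with ha | ha
  · refine ⟨0, by omega, ?_⟩
    have ha' : (1 : ℝ) ≤ a := by exact_mod_cast ha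
    rw [show (-a).toNat = 0 by omega]
    simpa using (div_le_one (by linarith)).2 ha'
  obtain ⟨k, rfl⟩ : ∃ k : ℕ, a = -k := ⟨(-a).toNat, by omega⟩
  rw [neg_neg, Int.toNat_natCast]
  obtain ⟨j, rfl | rfl⟩ := Nat.even_or_odd' k
  · refine ⟨j + 1, by omega, ?_⟩
    rw [show ((2 * (j + 1 : ℕ) + -(2 * j : ℕ) : ℤ) : ℝ) = 2 by push_cast; ring,
      le_sqrt (by positivity) (by positivity), div_pow, div_le_iff₀ (by positivity)]
    exact_mod_cast (by linarith [sq_factorial_succ_le_four_mul_factorial_two_mul j])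
  · refine ⟨j + 1, by omega, ?_⟩
    rw [show ((2 * (j + 1 : ℕ) + -(2 * j + 1 : ℕ) : ℤ) : ℝ) = 1 by push_cast; ring, div_one,
      le_sqrt (by positivity) (by positivity)]
    exact_mod_cast sq_factorial_succ_le_factorial_two_mul_add_one j

/-- The flow-parameter integral with exponential infrared suppression:
`∫₀^m e^{-m²/t²} t^{a-1} dt ≤ m^a √(max(-a,0)!)` for every integer `a` and `m > 0`. -/
theorem stmt_13 (m : ℝ) (hm : 0 < m) (a : ℤ) :
    ∫ t in (0 : ℝ)..m, Real.exp (-m ^ 2 / t ^ 2) * t ^ (a - 1) ≤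
      m ^ a * Real.sqrt (Nat.factorial (-a).toNat) := by
  obtain ⟨n, hpos, hfactorial⟩ := exists_factorial_div_le_sqrt_factorial a
  calc ∫ t in (0 : ℝ)..m, exp (-m ^ 2 / t ^ 2) * t ^ (a - 1)
      ≤ n ! / ((2 * n + a : ℤ) : ℝ) * m ^ a := integral_exp_neg_sq_div_sq_mul_zpow_le hm a n hpos
    _ ≤ √((-a).toNat !) * m ^ a := by gcongr
    _ = m ^ a * √((-a).toNat !) := mul_comm _ _
end

section
/- For all natural numbers $d,t$ and every real $x\ge 0$ one has $\frac{1}{\sqrt{t!}}\,\sum_{\mu=0}^{d}\frac{x^{\mu+t}}{\sqrt{\mu!}} \;\le\; \sum_{\mu=0}^{d+t}\frac{x^{\mu}}{\sqrt{\mu!}}\;2^{\mu/2}$. -/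
/-!
Since `(m + n)! = C(m + n, n) m! n! ≤ 2 ^ (m + n) m! n!`, each shifted term
`x ^ (μ + t) / (√μ! √t!)` is dominated by the term of index `μ + t` on the right, and the
remaining terms there are nonnegative.
-/

open Finset Nat Real

theorem Nat.factorial_add_le_two_pow_mul (m n : ℕ) :
    (m + n)! ≤ 2 ^ (m + n) * (m ! * n !) := by
  rw [← Nat.add_choose_mul_factorial_mul_factorial m n, mul_assoc]
  exact Nat.mul_le_mul_right _ (Nat.choose_le_two_pow _ _)

theorem Real.sqrt_factorial_add_le (m n : ℕ) :
    √((m + n)! : ℝ) ≤ √2 ^ (m + n) * (√(m ! : ℝ) * √(n ! : ℝ)) := by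
  rw [Real.sqrt_le_iff]
  refine ⟨by positivity, ?_⟩
  rw [mul_pow, mul_pow, ← pow_mul, mul_comm _ 2, pow_mul, Real.sq_sqrt zero_le_two,
    Real.sq_sqrt (Nat.cast_nonneg _), Real.sq_sqrt (Nat.cast_nonneg _)]
  exact_mod_cast Nat.factorial_add_le_two_pow_mul m n

theorem Real.div_sqrt_factorial_mul_le {y : ℝ} (hy : 0 ≤ y) (m n : ℕ) :
    y / (√(m ! : ℝ) * √(n ! : ℝ)) ≤ y / √((m + n)! : ℝ) * √2 ^ (m + n) := by
  have hpos : ∀ k : ℕ, 0 < √(k ! : ℝ) := fun k => Real.sqrt_pos.2 (by positivity)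
  rw [div_mul_eq_mul_div, div_le_div_iff₀ (mul_pos (hpos m) (hpos n)) (hpos _), mul_assoc]
  exact mul_le_mul_of_nonneg_left (Real.sqrt_factorial_add_le m n) hy

theorem Finset.sum_range_shift_le_of_nonneg {M : Type*} [AddCommMonoid M] [PartialOrder M]
    [IsOrderedAddMonoid M] {f : ℕ → M} (hf : ∀ n, 0 ≤ f n) (d t : ℕ) :
    ∑ μ ∈ range (d + 1), f (μ + t) ≤ ∑ μ ∈ range (d + t + 1), f μ := by
  rw [show d + t + 1 = t + (d + 1) by omega, sum_range_add f t]
  simp only [add_comm t]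
  exact le_add_of_nonneg_left (sum_nonneg fun n _ => hf n)

/-- The weighted power sum inequality absorbing a shift `t` into the summation range:
`(1/√t!) ∑_{μ≤d} x^{μ+t}/√μ! ≤ ∑_{μ≤d+t} (x^μ/√μ!) 2^{μ/2}` for `x ≥ 0`. -/
theorem stmt_14 (d t : ℕ) (x : ℝ) (hx : 0 ≤ x) :
    (1 / Real.sqrt (Nat.factorial t)) *
        ∑ μ ∈ Finset.range (d + 1), x ^ (μ + t) / Real.sqrt (Nat.factorial μ) ≤
      ∑ μ ∈ Finset.range (d + t + 1),
        x ^ μ / Real.sqrt (Nat.factorial μ) * Real.sqrt 2 ^ μ := by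
  calc (1 / √(t ! : ℝ)) * ∑ μ ∈ range (d + 1), x ^ (μ + t) / √(μ ! : ℝ)
      = ∑ μ ∈ range (d + 1), x ^ (μ + t) / (√(μ ! : ℝ) * √(t ! : ℝ)) := by
        rw [mul_sum]
        exact sum_congr rfl fun μ _ => by rw [div_mul_eq_div_div, one_div_mul_eq_div]
    _ ≤ ∑ μ ∈ range (d + 1), x ^ (μ + t) / √((μ + t)! : ℝ) * √2 ^ (μ + t) :=
        sum_le_sum fun μ _ => Real.div_sqrt_factorial_mul_le (pow_nonneg hx _) μ t
    _ ≤ ∑ μ ∈ range (d + t + 1), x ^ μ / √(μ ! : ℝ) * √2 ^ μ :=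
        sum_range_shift_le_of_nonneg (f := fun μ => x ^ μ / √(μ ! : ℝ) * √2 ^ μ)
          (fun μ => by positivity) d t
end
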